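/- Strong local (β,γ)-occupancy implies the pointwise occupancy inequality: for every vertex u of G, β·P(u ∈ I) + γ·E|I ∩ N(u)| ≥ 1, where I is a random independent set from the hard-core model on G at fugacity λ. -/

import Mathlib

open scoped Classical

/-- The finset of independent sets of a finite graph. -/
noncomputable def indepFinset {V : Type*} [Fintype V] (F : SimpleGraph V) :
    Finset (Finset V) :=
  Finset.univ.filter (fun I => ∀ u ∈ I, ∀ w ∈ I, ¬ F.Adj u w)

/-- The hard-core partition function `Z_F(λ) = Σ_{I independent} λ^|I|`. -/
noncomputable def hcZ {V : Type*} [Fintype V] (F : SimpleGraph V) (lam : ℝ) : ℝ :=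
  ∑ I ∈ indepFinset F, lam ^ I.card

section Aux
variable {V : Type*} [Fintype V]

lemma empty_mem_indepFinset (F : SimpleGraph V) : ∅ ∈ indepFinset F := by
  simp [indepFinset]

lemma hcZ_pos (F : SimpleGraph V) {lam : ℝ} (h : 0 < lam) : 0 < hcZ F lam :=
  Finset.sum_pos (fun I _ => pow_pos h _) ⟨∅, empty_mem_indepFinset F⟩

lemma indepFinset_of_isEmpty {W : Type*} [Fintype W] [IsEmpty W] (F : SimpleGraph W) :
    indepFinset F = {∅} := by
  ext I
  have hI : I = ∅ := Finset.eq_empty_of_isEmpty I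
  subst hI
  simp only [indepFinset, Finset.mem_filter, Finset.mem_univ, true_and, Finset.mem_singleton]
  constructor
  · intro _; trivial
  · intro _ a ha; exact absurd ha (by simp)

lemma hcZ_of_isEmpty {W : Type*} [Fintype W] [IsEmpty W] (F : SimpleGraph W) :
    hcZ F = fun _ => 1 := by
  funext x
  simp [hcZ, indepFinset_of_isEmpty]

/-- compatible independent sets inside S -/
noncomputable def locIndep (G : SimpleGraph V) (S : Finset V) : Finset (Finset V) :=
  S.powerset.filter (fun K => ∀ a ∈ K, ∀ b ∈ K, ¬ G.Adj a b)

lemma empty_mem_locIndep (G : SimpleGraph V) (S : Finset V) : ∅ ∈ locIndep G S := by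
  simp [locIndep]

lemma sum_indep_induce (G : SimpleGraph V) (S : Finset V) (f : ℕ → ℝ) :
    ∑ I ∈ indepFinset ((⊤ : G.Subgraph).induce ↑S).coe, f I.card
      = ∑ K ∈ locIndep G S, f K.card := by
  refine Finset.sum_nbij' (i := fun I => I.map (Function.Embedding.subtype _))
    (j := fun K => K.subtype _) ?_ ?_ ?_ ?_ ?_
  · intro I hI
    simp only [indepFinset, Finset.mem_filter, Finset.mem_univ, true_and] at hI
    simp only [locIndep, Finset.mem_filter, Finset.mem_powerset]
    constructor
    · intro x hx
      simp only [Finset.mem_map, Function.Embedding.coe_subtype] at hx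
      obtain ⟨a, _, rfl⟩ := hx
      exact_mod_cast a.2
    · intro a ha b hb hab
      simp only [Finset.mem_map, Function.Embedding.coe_subtype] at ha hb
      obtain ⟨a', ha', rfl⟩ := ha
      obtain ⟨b', hb', rfl⟩ := hb
      exact hI a' ha' b' hb' (by simp [SimpleGraph.Subgraph.coe_adj, a'.2, b'.2, hab]; exact ⟨a'.2, b'.2⟩)
  · intro K hK
    simp only [locIndep, Finset.mem_filter, Finset.mem_powerset] at hK
    simp only [indepFinset, Finset.mem_filter, Finset.mem_univ, true_and]
    intro a ha b hb hab
    simp only [Finset.mem_subtype] at ha hb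
    rw [SimpleGraph.Subgraph.coe_adj, SimpleGraph.Subgraph.induce_adj] at hab
    exact hK.2 a ha b hb hab.2.2
  · intro I hI
    ext a
    simp only [Finset.mem_subtype, Finset.mem_map, Function.Embedding.coe_subtype]
    constructor
    · rintro ⟨b, hbI, heq⟩
      have : b = a := Subtype.ext heq
      rwa [this] at hbI
    · intro ha
      exact ⟨a, ha, rfl⟩
  · intro K hK
    simp only [locIndep, Finset.mem_filter, Finset.mem_powerset] at hK
    ext a
    simp only [Finset.mem_map, Finset.mem_subtype, Function.Embedding.coe_subtype]
    constructor
    · rintro ⟨b, hb, rfl⟩; exact hb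
    · intro ha
      exact ⟨⟨a, hK.1 ha⟩, by simpa, rfl⟩
  · intro I hI
    rw [Finset.card_map]

lemma hcZ_induce (G : SimpleGraph V) (S : Finset V) :
    hcZ ((⊤ : G.Subgraph).induce ↑S).coe = fun x => ∑ K ∈ locIndep G S, x ^ K.card := by
  funext x
  exact sum_indep_induce G S (fun n => x ^ n)

lemma deriv_polysum (T : Finset (Finset V)) (x : ℝ) :
    deriv (fun y : ℝ => ∑ K ∈ T, y ^ K.card) x
      = ∑ K ∈ T, (K.card : ℝ) * x ^ (K.card - 1) :=
  (HasDerivAt.fun_sum (fun K _ => hasDerivAt_pow K.card x)).deriv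

lemma mul_deriv_polysum (T : Finset (Finset V)) (x : ℝ) :
    x * ∑ K ∈ T, (K.card : ℝ) * x ^ (K.card - 1)
      = ∑ K ∈ T, (K.card : ℝ) * x ^ K.card := by
  rw [Finset.mul_sum]
  refine Finset.sum_congr rfl fun K _ => ?_
  rcases Nat.eq_zero_or_pos K.card with h | h
  · simp [h]
  · obtain ⟨n, hn⟩ : ∃ n, K.card = n + 1 := ⟨K.card - 1, (Nat.succ_pred_eq_of_pos h).symm⟩
    rw [hn]
    simp only [Nat.add_sub_cancel]
    push_cast
    rw [pow_succ]
    ring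

end Aux

/-- The hard-core model on `G` at fugacity `λ` has strong local `(β,γ)`-occupancy:
for every vertex `u` and every subgraph `F` of `G[N(u)]`,
`β·(λ/(1+λ))·(1/Z_F(λ)) + γ·(λ Z_F'(λ)/Z_F(λ)) ≥ 1`. -/
def StrongLocalOcc {V : Type*} [Fintype V] (G : SimpleGraph V) (lam β γ : ℝ) : Prop :=
  ∀ (u : V) (H' : G.Subgraph), H'.verts ⊆ G.neighborSet u →
    β * (lam / (1 + lam)) * (1 / hcZ H'.coe lam)
      + γ * (lam * deriv (hcZ H'.coe) lam / hcZ H'.coe lam) ≥ 1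


section Occ
variable {V : Type*} [Fintype V] {G : SimpleGraph V} {lam β γ : ℝ}

lemma occ_bot (hocc : StrongLocalOcc G lam β γ) (u : V) :
    1 ≤ β * (lam / (1 + lam)) := by
  have h := hocc u ⊥ (by simp [SimpleGraph.Subgraph.verts_bot])
  haveI : IsEmpty ↥((⊥ : G.Subgraph).verts) := by
    rw [SimpleGraph.Subgraph.verts_bot]
    exact Set.isEmpty_coe_sort.mpr rfl
  rw [hcZ_of_isEmpty] at h
  simpa using h

lemma occ_main (hlam : 0 < lam) (hocc : StrongLocalOcc G lam β γ) (u : V)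
    (S : Finset V) (hS : S ⊆ G.neighborFinset u) :
    ∑ K ∈ locIndep G S, lam ^ K.card
      ≤ β * (lam / (1 + lam)) + γ * ∑ K ∈ locIndep G S, (K.card : ℝ) * lam ^ K.card := by
  have hsub : ((⊤ : G.Subgraph).induce ↑S).verts ⊆ G.neighborSet u := by
    simp only [SimpleGraph.Subgraph.induce_verts]
    intro x hx
    rw [SimpleGraph.mem_neighborSet, ← SimpleGraph.mem_neighborFinset]
    exact hS hx
  have h := hocc u _ hsub
  rw [hcZ_induce, deriv_polysum] at h
  set Z : ℝ := ∑ K ∈ locIndep G S, lam ^ K.card with hZdef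
  set D : ℝ := ∑ K ∈ locIndep G S, (K.card : ℝ) * lam ^ (K.card - 1) with hDdef
  have hZ : 0 < Z :=
    Finset.sum_pos (fun K _ => pow_pos hlam _) ⟨∅, empty_mem_locIndep G S⟩
  have hrw : β * (lam / (1 + lam)) * (1 / Z) + γ * (lam * D / Z)
      = (β * (lam / (1 + lam)) + γ * (lam * D)) / Z := by ring
  rw [ge_iff_le, hrw, le_div_iff₀ hZ, one_mul] at h
  calc Z ≤ β * (lam / (1 + lam)) + γ * (lam * D) := h
    _ = β * (lam / (1 + lam)) + γ * ∑ K ∈ locIndep G S, (K.card : ℝ) * lam ^ K.card := by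
        rw [mul_deriv_polysum]

lemma occ_core (hlam : 0 < lam) (hocc : StrongLocalOcc G lam β γ) (u : V)
    (S : Finset V) (hS : S ⊆ G.neighborFinset u) :
    lam + ∑ K ∈ locIndep G S, lam ^ K.card
      ≤ β * lam + γ * ∑ K ∈ locIndep G S, (K.card : ℝ) * lam ^ K.card := by
  have h1 := occ_bot hocc u
  have h2 := occ_main hlam hocc u S hS
  have h3 : (lam / (1 + lam)) * (1 + lam) = lam :=
    div_mul_cancel₀ _ (by linarith)
  have hne : (1 + lam) ≠ 0 := by linarith
  have h4 : β * lam = β * (lam / (1 + lam)) + β * (lam / (1 + lam)) * lam := by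
    field_simp
  have h5 : 1 * lam ≤ (β * (lam / (1 + lam))) * lam :=
    mul_le_mul_of_nonneg_right h1 hlam.le
  linarith

end Occ

section ClassEq
variable {V : Type*} [Fintype V]

lemma mem_indepFinset {F : SimpleGraph V} {I : Finset V} :
    I ∈ indepFinset F ↔ ∀ a ∈ I, ∀ b ∈ I, ¬ F.Adj a b := by
  simp [indepFinset]

lemma class_eq (G : SimpleGraph V) (u : V) (J : Finset V)
    (hJind : ∀ a ∈ J, ∀ b ∈ J, ¬ G.Adj a b)
    (hJdisj : ∀ v ∈ J, v ∉ insert u (G.neighborFinset u)) :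
    (indepFinset G).filter (fun I => I \ insert u (G.neighborFinset u) = J)
      = insert (insert u J)
          ((locIndep G ((G.neighborFinset u).filter (fun w => ∀ v ∈ J, ¬ G.Adj w v))).image
            (fun K => J ∪ K)) := by
  set N := G.neighborFinset u with hN
  set S := N.filter (fun w => ∀ v ∈ J, ¬ G.Adj w v) with hSdef
  have hJu : u ∉ J := fun h => hJdisj u h (Finset.mem_insert_self _ _)
  have hJN : ∀ v ∈ J, v ∉ N := fun v hv hvN =>
    hJdisj v hv (Finset.mem_insert_of_mem hvN)
  have huN : u ∉ N := by
    rw [hN, SimpleGraph.mem_neighborFinset]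
    exact G.irrefl
  ext I
  simp only [Finset.mem_filter, Finset.mem_insert, Finset.mem_image, mem_indepFinset]
  constructor
  · rintro ⟨hIind, hIJ⟩
    have hJI : J ⊆ I := by
      intro a ha; rw [← hIJ] at ha; exact (Finset.mem_sdiff.1 ha).1
    by_cases hu : u ∈ I
    · left
      have hIN : ∀ w ∈ I, w ∉ N := fun w hw hwN =>
        hIind u hu w hw ((SimpleGraph.mem_neighborFinset G u w).1 hwN)
      ext a
      rw [Finset.mem_insert]
      constructor
      · intro ha
        by_cases hau : a = u
        · exact Or.inl hau
        · refine Or.inr ?_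
          rw [← hIJ, Finset.mem_sdiff]
          exact ⟨ha, by simp [hau, hIN a ha]⟩
      · rintro (rfl | haJ)
        · exact hu
        · exact hJI haJ
    · refine Or.inr ⟨I ∩ N, ?_, ?_⟩
      · rw [locIndep, Finset.mem_filter, Finset.mem_powerset]
        constructor
        · intro w hw
          rw [Finset.mem_inter] at hw
          rw [hSdef, Finset.mem_filter]
          exact ⟨hw.2, fun v hv => fun hadj => hIind w hw.1 v (hJI hv) hadj⟩
        · intro a ha b hb
          rw [Finset.mem_inter] at ha hb
          exact hIind a ha.1 b hb.1
      · ext a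
        rw [Finset.mem_union, Finset.mem_inter]
        constructor
        · rintro (haJ | ⟨haI, _⟩)
          · exact hJI haJ
          · exact haI
        · intro haI
          by_cases haN : a ∈ N
          · exact Or.inr ⟨haI, haN⟩
          · refine Or.inl ?_
            rw [← hIJ, Finset.mem_sdiff]
            have hau : a ≠ u := fun h => hu (h ▸ haI)
            exact ⟨haI, by simp [hau, haN]⟩
  · rintro (rfl | ⟨K, hK, rfl⟩)
    · constructor
      · intro a ha b hb hab
        rw [Finset.mem_insert] at ha hb
        rcases ha with rfl | ha
        · rcases hb with rfl | hb
          · exact G.irrefl hab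
          · exact hJN b hb ((SimpleGraph.mem_neighborFinset G a b).2 hab)
        · rcases hb with rfl | hb
          · exact hJN a ha ((SimpleGraph.mem_neighborFinset G b a).2 hab.symm)
          · exact hJind a ha b hb hab
      · ext a
        rw [Finset.mem_sdiff, Finset.mem_insert, Finset.mem_insert]
        constructor
        · rintro ⟨rfl | haJ, hnot⟩
          · exact absurd (Or.inl rfl) hnot
          · exact haJ
        · intro haJ
          refine ⟨Or.inr haJ, fun h => hJdisj a haJ ?_⟩
          rwa [Finset.mem_insert]
    · rw [locIndep, Finset.mem_filter, Finset.mem_powerset] at hK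
      have hKS : K ⊆ S := hK.1
      have hKN : ∀ w ∈ K, w ∈ N := fun w hw => (Finset.mem_filter.1 (hKS hw)).1
      have hKJ : ∀ w ∈ K, ∀ v ∈ J, ¬ G.Adj w v := fun w hw =>
        (Finset.mem_filter.1 (hKS hw)).2
      constructor
      · intro a ha b hb hab
        rw [Finset.mem_union] at ha hb
        rcases ha with ha | ha
        · rcases hb with hb | hb
          · exact hJind a ha b hb hab
          · exact hKJ b hb a ha hab.symm
        · rcases hb with hb | hb
          · exact hKJ a ha b hb hab
          · exact hK.2 a ha b hb hab
      · ext a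
        rw [Finset.mem_sdiff, Finset.mem_union, Finset.mem_insert]
        constructor
        · rintro ⟨haJ | haK, hnot⟩
          · exact haJ
          · exact absurd (Or.inr (hKN a haK)) hnot
        · intro haJ
          exact ⟨Or.inl haJ, fun h => hJdisj a haJ (by rwa [Finset.mem_insert])⟩

end ClassEq

/-- Strong local `(β,γ)`-occupancy implies the pointwise occupancy inequality
`β·P(u ∈ I) + γ·E|I ∩ N(u)| ≥ 1` for every vertex `u`, where `I` is a hard-core random
independent set. -/
theorem stmt12 {V : Type*} [Fintype V] (G : SimpleGraph V)
    (lam β γ : ℝ) (hlam : 0 < lam) (hβ : 0 < β) (hγ : 0 < γ)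
    (hocc : StrongLocalOcc G lam β γ) (u : V) :
    β * ((∑ I ∈ (indepFinset G).filter (fun I => u ∈ I), lam ^ I.card) / hcZ G lam)
      + γ * ((∑ I ∈ indepFinset G,
          lam ^ I.card * ((I.filter (fun w => G.Adj u w)).card : ℝ)) / hcZ G lam)
      ≥ 1 := by
  have hZG : 0 < hcZ G lam := hcZ_pos G hlam
  rw [ge_iff_le]
  set A := ∑ I ∈ (indepFinset G).filter (fun I => u ∈ I), lam ^ I.card with hA
  set B := ∑ I ∈ indepFinset G,
      lam ^ I.card * ((I.filter (fun w => G.Adj u w)).card : ℝ) with hB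
  have hrw : β * (A / hcZ G lam) + γ * (B / hcZ G lam)
      = (β * A + γ * B) / hcZ G lam := by ring
  rw [hrw, le_div_iff₀ hZG, one_mul]
  have hA' : A = ∑ I ∈ indepFinset G, (if u ∈ I then lam ^ I.card else 0) := by
    rw [hA, Finset.sum_filter]
  rw [hA', hB, hcZ, Finset.mul_sum, Finset.mul_sum, ← Finset.sum_add_distrib]
  conv_lhs => rw [← Finset.sum_fiberwise_of_maps_to
        (g := fun I : Finset V => I \ insert u (G.neighborFinset u)) (t := Finset.univ)
        (fun I _ => Finset.mem_univ _) (f := fun I => lam ^ I.card)]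
  conv_rhs => rw [← Finset.sum_fiberwise_of_maps_to
        (g := fun I : Finset V => I \ insert u (G.neighborFinset u)) (t := Finset.univ)
        (fun I _ => Finset.mem_univ _)]
  apply Finset.sum_le_sum
  intro J _
  by_cases hCne : ((indepFinset G).filter
      (fun I => I \ insert u (G.neighborFinset u) = J)).Nonempty
  · obtain ⟨I₀, hI₀⟩ := hCne
    rw [Finset.mem_filter] at hI₀
    have hI₀ind := mem_indepFinset.1 hI₀.1
    have hJsub : J ⊆ I₀ := by
      rw [← hI₀.2]; exact Finset.sdiff_subset
    have hJind : ∀ a ∈ J, ∀ b ∈ J, ¬ G.Adj a b :=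
      fun a ha b hb => hI₀ind a (hJsub ha) b (hJsub hb)
    have hJdisj : ∀ v ∈ J, v ∉ insert u (G.neighborFinset u) := by
      intro v hv
      rw [← hI₀.2] at hv
      exact (Finset.mem_sdiff.1 hv).2
    have hJu : u ∉ J := fun h => hJdisj u h (Finset.mem_insert_self _ _)
    have hJN : ∀ v ∈ J, v ∉ G.neighborFinset u := fun v hv h =>
      hJdisj v hv (Finset.mem_insert_of_mem h)
    set S := (G.neighborFinset u).filter (fun w => ∀ v ∈ J, ¬ G.Adj w v) with hSdef
    have hSN : S ⊆ G.neighborFinset u := Finset.filter_subset _ _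
    have hclass := class_eq G u J hJind hJdisj
    have hnotmem : insert u J ∉ (locIndep G S).image (fun K => J ∪ K) := by
      rw [Finset.mem_image]
      rintro ⟨K, hK, hKeq⟩
      have hu : u ∈ J ∪ K := hKeq ▸ Finset.mem_insert_self u J
      rw [Finset.mem_union] at hu
      rcases hu with h | h
      · exact hJu h
      · rw [locIndep, Finset.mem_filter, Finset.mem_powerset] at hK
        have : u ∈ G.neighborFinset u := hSN (hK.1 h)
        rw [SimpleGraph.mem_neighborFinset] at this
        exact G.irrefl this
    have hinj : ∀ K₁ ∈ locIndep G S, ∀ K₂ ∈ locIndep G S,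
        J ∪ K₁ = J ∪ K₂ → K₁ = K₂ := by
      intro K₁ hK₁ K₂ hK₂ heq
      have hKrec : ∀ K ∈ locIndep G S, (J ∪ K) ∩ G.neighborFinset u = K := by
        intro K hK
        rw [locIndep, Finset.mem_filter, Finset.mem_powerset] at hK
        ext a
        rw [Finset.mem_inter, Finset.mem_union]
        constructor
        · rintro ⟨haJ | haK, haN⟩
          · exact absurd haN (hJN a haJ)
          · exact haK
        · intro haK
          exact ⟨Or.inr haK, hSN (hK.1 haK)⟩
      rw [← hKrec K₁ hK₁, ← hKrec K₂ hK₂, heq]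
    have hcard1 : (insert u J).card = J.card + 1 := Finset.card_insert_of_notMem hJu
    have hfilt1 : (insert u J).filter (fun w => G.Adj u w) = ∅ := by
      ext a
      simp only [Finset.mem_filter, Finset.mem_insert, Finset.notMem_empty, iff_false,
        not_and]
      rintro (rfl | haJ) hadj
      · exact G.irrefl hadj
      · exact hJN a haJ ((SimpleGraph.mem_neighborFinset G u a).2 hadj)
    have hKfacts : ∀ K ∈ locIndep G S,
        (J ∪ K).card = J.card + K.card ∧ u ∉ J ∪ K ∧
          (J ∪ K).filter (fun w => G.Adj u w) = K := by
      intro K hK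
      rw [locIndep, Finset.mem_filter, Finset.mem_powerset] at hK
      have hKN : ∀ w ∈ K, w ∈ G.neighborFinset u := fun w hw => hSN (hK.1 hw)
      have hdisj : Disjoint J K := by
        rw [Finset.disjoint_left]
        intro a haJ haK
        exact hJN a haJ (hKN a haK)
      refine ⟨Finset.card_union_of_disjoint hdisj, ?_, ?_⟩
      · rw [Finset.mem_union]
        rintro (h | h)
        · exact hJu h
        · have := hKN u h
          rw [SimpleGraph.mem_neighborFinset] at this
          exact G.irrefl this
      · ext a
        simp only [Finset.mem_filter, Finset.mem_union]
        constructor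
        · rintro ⟨haJ | haK, hadj⟩
          · exact absurd ((SimpleGraph.mem_neighborFinset G u a).2 hadj) (hJN a haJ)
          · exact haK
        · intro haK
          exact ⟨Or.inr haK, (SimpleGraph.mem_neighborFinset G u a).1 (hKN a haK)⟩
    rw [hclass, Finset.sum_insert hnotmem, Finset.sum_insert hnotmem,
        Finset.sum_image hinj, Finset.sum_image hinj]
    have hL : lam ^ (insert u J).card + ∑ K ∈ locIndep G S, lam ^ (J ∪ K).card
        = lam ^ J.card * (lam + ∑ K ∈ locIndep G S, lam ^ K.card) := by
      rw [hcard1, mul_add, Finset.mul_sum, ← pow_succ]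
      congr 1
      refine Finset.sum_congr rfl fun K hK => ?_
      rw [(hKfacts K hK).1, pow_add]
    have hR : (β * (if u ∈ insert u J then lam ^ (insert u J).card else 0)
          + γ * (lam ^ (insert u J).card
              * (((insert u J).filter (fun w => G.Adj u w)).card : ℝ)))
        + ∑ K ∈ locIndep G S,
            (β * (if u ∈ J ∪ K then lam ^ (J ∪ K).card else 0)
              + γ * (lam ^ (J ∪ K).card
                  * (((J ∪ K).filter (fun w => G.Adj u w)).card : ℝ)))
        = lam ^ J.card * (β * lam
            + γ * ∑ K ∈ locIndep G S, (K.card : ℝ) * lam ^ K.card) := by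
      rw [if_pos (Finset.mem_insert_self u J), hfilt1, hcard1]
      have hsum : ∑ K ∈ locIndep G S,
            (β * (if u ∈ J ∪ K then lam ^ (J ∪ K).card else 0)
              + γ * (lam ^ (J ∪ K).card
                  * (((J ∪ K).filter (fun w => G.Adj u w)).card : ℝ)))
          = ∑ K ∈ locIndep G S,
              lam ^ J.card * (γ * ((K.card : ℝ) * lam ^ K.card)) := by
        refine Finset.sum_congr rfl fun K hK => ?_
        obtain ⟨hc, hu', hf⟩ := hKfacts K hK
        rw [if_neg hu', hc, hf, pow_add]
        ring
      rw [hsum, ← Finset.mul_sum, ← Finset.mul_sum]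
      simp only [Finset.card_empty, Nat.cast_zero, mul_zero, add_zero]
      rw [pow_succ]
      ring
    rw [hL, hR]
    exact mul_le_mul_of_nonneg_left (occ_core hlam hocc u S hSN)
      (pow_nonneg hlam.le _)
  · rw [Finset.not_nonempty_iff_eq_empty] at hCne
    rw [hCne, Finset.sum_empty, Finset.sum_empty]
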